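/- arXiv:2410.06080 — 2 statements merged into one kernel-verified Lean document; each statement's English description precedes it below -/
import Mathlib

section
/- Let β ∈ [1/2, 2/3] and let E be a set of items of a unit-density instance such that v(Opt(E_a)) < β·C for every agent a. Then, for every agent a and every item i ∈ E_a, the set R(E) a-dominates the set R(E∖{i}) (with R(∅) = ∅). -/
/-!
Write `m = i*(E)` and `m' = i*(E∖{i})`. Every item of `R(F)` is worth at most `i*(F)`, since an
item worth more than `i*(F)` overflows together with it; so the items of `R(F)` fit pairwise.
If `m' = m`, then `R(E∖{i}) = R(E)∖{i}`. If `m' < m`, then `m = i`: the other agents only gain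
items, while agent `a` trades `m` for at most one cheaper item. If `m < m'`, then `i` is what kept
`m'` out of `P(E)`, so `m'` belongs to another agent: agent `a` only loses items, while the other
agents trade at most one cheaper item for `m'`. In both cases "at most one" holds because two
traded items belong to one agent, fit together and each overflows with an item worth less than
`β·C`, which would give that agent a feasible packing worth more than `(2 - 2β)·C ≥ β·C`.
-/

open Finset

/-- The optimal value of the knapsack problem on a unit-density item set `E`. -/
noncomputable def optValUD {ι : Type*} (v : ι → ℝ) (C : ℝ) (E : Finset ι) : ℝ :=
  sSup ((fun D : Finset ι => ∑ i ∈ D, v i) '' {D : Finset ι | D ⊆ E ∧ ∑ i ∈ D, v i ≤ C})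

/-- `P(E)`: items that fit together with every less valuable item of other agents. -/
noncomputable def Pset {ι A : Type*} [DecidableEq ι] [DecidableEq A]
    (v : ι → ℝ) (owner : ι → A) (C : ℝ) (E : Finset ι) : Finset ι :=
  E.filter (fun i => ∀ j ∈ E, owner j ≠ owner i → v j < v i → v i + v j ≤ C)

/-- `i*(E)`: the most valuable item of `P(E)`. -/
noncomputable def istar {ι A : Type*} [DecidableEq ι] [DecidableEq A] [Nonempty ι]
    (v : ι → ℝ) (owner : ι → A) (C : ℝ) (E : Finset ι) : ι :=
  if h : (Pset v owner C E).Nonempty then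
    ((Pset v owner C E).exists_max_image v h).choose
  else Classical.arbitrary ι

/-- `R(E) = {i*(E)} ∪ {i ∈ E : v_{i*(E)} + v_i ≤ C}`, with `R(∅) = ∅`. -/
noncomputable def Rset {ι A : Type*} [DecidableEq ι] [DecidableEq A] [Nonempty ι]
    (v : ι → ℝ) (owner : ι → A) (C : ℝ) (E : Finset ι) : Finset ι :=
  if E.Nonempty then
    insert (istar v owner C E) (E.filter (fun i => v (istar v owner C E) + v i ≤ C))
  else ∅

/-- The `k`-th largest value (1-indexed) among the items of `F`. -/
noncomputable def kthLargest {ι : Type*} (v : ι → ℝ) (F : Finset ι) (k : ℕ) : ℝ :=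
  ((F.image v).sort (· ≤ ·)).reverse.getD (k - 1) 0

/-- `F` `a`-dominates `F'`. -/
def aDominates {ι A : Type*} [DecidableEq ι] [DecidableEq A]
    (v : ι → ℝ) (owner : ι → A) (a : A) (F F' : Finset ι) : Prop :=
  (F'.filter (fun i => owner i = a)).card ≤ (F.filter (fun i => owner i = a)).card ∧
  (F.filter (fun i => ¬ owner i = a)).card ≤ (F'.filter (fun i => ¬ owner i = a)).card ∧
  (∀ k : ℕ, 1 ≤ k → k ≤ (F'.filter (fun i => owner i = a)).card →
    kthLargest v (F'.filter (fun i => owner i = a)) k ≤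
      kthLargest v (F.filter (fun i => owner i = a)) k) ∧
  (∀ k : ℕ, 1 ≤ k → k ≤ (F.filter (fun i => ¬ owner i = a)).card →
    kthLargest v (F.filter (fun i => ¬ owner i = a)) k ≤
      kthLargest v (F'.filter (fun i => ¬ owner i = a)) k)

section ValueDominated

variable {ι α : Type*} [LinearOrder α]

def ValueDominated (v : ι → α) (F G : Finset ι) : Prop :=
  ∀ t, #{x ∈ F | t ≤ v x} ≤ #{x ∈ G | t ≤ v x}

variable {v : ι → α} {F G H : Finset ι}

theorem ValueDominated.trans (h₁ : ValueDominated v F G) (h₂ : ValueDominated v G H) :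
    ValueDominated v F H :=
  fun t => (h₁ t).trans (h₂ t)

theorem ValueDominated.of_subset (h : F ⊆ G) : ValueDominated v F G :=
  fun _ => card_le_card (filter_subset_filter _ h)

theorem ValueDominated.card_le (h : ValueDominated v F G) : #F ≤ #G := by
  rcases F.eq_empty_or_nonempty with rfl | hF
  · simp
  obtain ⟨x, -, hx⟩ := F.exists_min_image v hF
  calc #F = #{y ∈ F | v x ≤ v y} := by rw [filter_true_of_mem hx]
    _ ≤ #{y ∈ G | v x ≤ v y} := h (v x)
    _ ≤ #G := card_filter_le _ _

variable [DecidableEq ι]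

theorem valueDominated_insert_erase {x y : ι} (hy : y ∈ G) (hxy : v x ≤ v y) :
    ValueDominated v (insert x (G.erase y)) G := by
  intro t
  rw [filter_insert, filter_erase]
  split_ifs with ht
  · calc _ ≤ #({z ∈ G | t ≤ v z}.erase y) + 1 := card_insert_le _ _
      _ = _ := card_erase_add_one (mem_filter.2 ⟨hy, ht.trans hxy⟩)
  · exact card_le_card (erase_subset _ _)

theorem ValueDominated.of_sdiff {y : ι} (hyG : y ∈ G) (hyF : y ∉ F)
    (hle : ∀ x ∈ F \ G, v x ≤ v y) (hsub : ∀ x ∈ F \ G, ∀ x' ∈ F \ G, x = x') :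
    ValueDominated v F G := by
  rcases (F \ G).eq_empty_or_nonempty with h | ⟨x, hx⟩
  · exact .of_subset (sdiff_eq_empty_iff_subset.1 h)
  refine (ValueDominated.of_subset fun z hz => ?_).trans
    (valueDominated_insert_erase hyG (hle x hx))
  by_cases hzG : z ∈ G
  · exact mem_insert_of_mem (mem_erase.2 ⟨ne_of_mem_of_not_mem hz hyF, hzG⟩)
  · rw [hsub z (mem_sdiff.2 ⟨hz, hzG⟩) x hx]
    exact mem_insert_self _ _

end ValueDominated

section KthLargest

theorem card_filter_orderEmbOfFin_le {α : Type*} [LinearOrder α] (X : Finset α) (j : Fin #X) :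
    #{x ∈ X | X.orderEmbOfFin rfl j ≤ x} = #X - j := by
  set f := X.orderEmbOfFin rfl
  have : {x ∈ X | f j ≤ x} = (Ici j).map f.toEmbedding := by
    ext x
    simp only [mem_filter, mem_map, mem_Ici, RelEmbedding.coe_toEmbedding]
    constructor
    · rintro ⟨hx, hjx⟩
      obtain ⟨a, rfl⟩ : x ∈ Set.range f := by rwa [range_orderEmbOfFin]
      exact ⟨a, f.le_iff_le.1 hjx, rfl⟩
    · rintro ⟨a, ha, rfl⟩
      exact ⟨orderEmbOfFin_mem _ _ _, f.monotone ha⟩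
  rw [this, card_map, Fin.card_Ici]

variable {ι : Type*} {v : ι → ℝ}

theorem kthLargest_eq_orderEmbOfFin (F : Finset ι) {k : ℕ} (hk : 1 ≤ k)
    (hkF : k ≤ #(F.image v)) :
    kthLargest v F k = (F.image v).orderEmbOfFin rfl ⟨#(F.image v) - k, by omega⟩ := by
  have hlen : ((F.image v).sort (· ≤ ·)).length = #(F.image v) := length_sort _
  rw [kthLargest, List.getD_eq_getElem _ _ (by simp [hlen]; omega), List.getElem_reverse,
    orderEmbOfFin_apply]
  congr 1
  simp only [hlen]
  omega

theorem card_filter_kthLargest_le (hv : Function.Injective v) (F : Finset ι) {k : ℕ}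
    (hk : 1 ≤ k) (hkF : k ≤ #F) : #{x ∈ F | kthLargest v F k ≤ v x} = k := by
  have hcard : #(F.image v) = #F := card_image_of_injective _ hv
  rw [kthLargest_eq_orderEmbOfFin F hk (hcard ▸ hkF), ← card_image_of_injective _ hv,
    ← filter_image, card_filter_orderEmbOfFin_le]
  simp only
  omega

theorem exists_kthLargest_eq (F : Finset ι) {k : ℕ} (hk : 1 ≤ k) (hkF : k ≤ #(F.image v)) :
    ∃ x ∈ F, v x = kthLargest v F k := by
  rw [← mem_image, kthLargest_eq_orderEmbOfFin F hk hkF]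
  exact orderEmbOfFin_mem _ _ _

theorem ValueDominated.kthLargest_le [DecidableEq ι] (hv : Function.Injective v) {F G : Finset ι}
    (h : ValueDominated v F G) {k : ℕ} (hk : 1 ≤ k) (hkF : k ≤ #F) :
    kthLargest v F k ≤ kthLargest v G k := by
  have hG : k ≤ #{x ∈ G | kthLargest v F k ≤ v x} :=
    (card_filter_kthLargest_le hv F hk hkF).ge.trans (h _)
  have hkG : k ≤ #G := hG.trans (card_filter_le _ _)
  obtain ⟨y, hyG, hy⟩ := exists_kthLargest_eq G hk (by rwa [card_image_of_injective _ hv])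
  by_contra hlt
  rw [not_le, ← hy] at hlt
  have hsub : {x ∈ G | kthLargest v F k ≤ v x} ⊆ {x ∈ G | v y ≤ v x}.erase y := by
    intro x hx
    obtain ⟨hxG, hx⟩ := mem_filter.1 hx
    exact mem_erase.2
      ⟨fun h => not_le.2 hlt (by rwa [h] at hx), mem_filter.2 ⟨hxG, hlt.le.trans hx⟩⟩
  have := (card_le_card hsub).trans_lt (card_erase_lt_of_mem (mem_filter.2 ⟨hyG, le_rfl⟩))
  rw [hy, card_filter_kthLargest_le hv G hk hkG] at this
  omega

end KthLargest

section Domination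

variable {ι A : Type*} [DecidableEq ι] [DecidableEq A] {v : ι → ℝ} (owner : ι → A)

theorem aDominates_of_valueDominated (hv : Function.Injective v) {a : A} {F F' : Finset ι}
    (hown : ValueDominated v {x ∈ F' | owner x = a} {x ∈ F | owner x = a})
    (hother : ValueDominated v {x ∈ F | ¬owner x = a} {x ∈ F' | ¬owner x = a}) :
    aDominates v owner a F F' :=
  ⟨hown.card_le, hother.card_le, fun _ hk hkF => hown.kthLargest_le hv hk hkF,
    fun _ hk hkF => hother.kthLargest_le hv hk hkF⟩

theorem aDominates_erase (hv : Function.Injective v) (F : Finset ι) (i : ι) :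
    aDominates v owner (owner i) F (F.erase i) := by
  refine aDominates_of_valueDominated owner hv (.of_subset ?_) (.of_subset ?_)
  · exact filter_subset_filter _ (erase_subset _ _)
  · intro x hx
    obtain ⟨hxF, hxi⟩ := mem_filter.1 hx
    exact mem_filter.2 ⟨mem_erase.2 ⟨fun h => hxi (h ▸ rfl), hxF⟩, hxi⟩

end Domination

section Overflow

variable {ι A : Type*} (v : ι → ℝ) (owner : ι → A) (C : ℝ) (E : Finset ι)

def HeavyPairsOverflow : Prop :=
  ∀ p ∈ E, ∀ x ∈ E, ∀ x' ∈ E, x ≠ x' → owner x = owner x' →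
    C < v p + v x → C < v p + v x' → C < v x + v x'

theorem sum_le_optValUD {D : Finset ι} (hD : D ⊆ E) (hDC : ∑ i ∈ D, v i ≤ C) :
    ∑ i ∈ D, v i ≤ optValUD v C E :=
  le_csSup ⟨C, by rintro _ ⟨D', hD', rfl⟩; exact hD'.2⟩ ⟨D, ⟨hD, hDC⟩, rfl⟩

theorem heavyPairsOverflow_of_optValUD_lt [DecidableEq ι] [DecidableEq A] {β : ℝ} (hC : 0 < C)
    (hvC : ∀ i, v i ≤ C) (hβ : β ≤ 2 / 3)
    (hopt : ∀ a, optValUD v C (E.filter (fun i => owner i = a)) < β * C) :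
    HeavyPairsOverflow v owner C E := by
  intro p hp x hx x' hx' hne hown hpx hpx'
  have hp_small : v p < β * C := by
    have hsub : {p} ⊆ E.filter (fun i => owner i = owner p) :=
      singleton_subset_iff.2 (mem_filter.2 ⟨hp, rfl⟩)
    have hsingle := sum_le_optValUD v C _ hsub (by simpa using hvC p)
    rw [sum_singleton] at hsingle
    exact hsingle.trans_lt (hopt (owner p))
  by_contra! hfit
  have hsub : {x, x'} ⊆ E.filter (fun i => owner i = owner x) :=
    insert_subset (mem_filter.2 ⟨hx, rfl⟩)
      (singleton_subset_iff.2 (mem_filter.2 ⟨hx', hown.symm⟩))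
  have hpair := sum_le_optValUD v C _ hsub (by rwa [sum_pair hne])
  rw [sum_pair hne] at hpair
  nlinarith [hpair.trans_lt (hopt (owner x))]

end Overflow

section Knapsack

variable {ι A : Type*} [DecidableEq ι] [DecidableEq A]
  {v : ι → ℝ} {owner : ι → A} {C : ℝ} {E F G : Finset ι} {i j x : ι}

theorem mem_Pset :
    j ∈ Pset v owner C E ↔
      j ∈ E ∧ ∀ k ∈ E, owner k ≠ owner j → v k < v j → v j + v k ≤ C :=
  mem_filter

theorem mem_Pset_erase (hj : j ∈ Pset v owner C E) (hji : j ≠ i) :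
    j ∈ Pset v owner C (E.erase i) :=
  mem_Pset.2 ⟨mem_erase.2 ⟨hji, (mem_Pset.1 hj).1⟩,
    fun k hk => (mem_Pset.1 hj).2 k (mem_of_mem_erase hk)⟩

theorem Pset_nonempty (hE : E.Nonempty) : (Pset v owner C E).Nonempty := by
  obtain ⟨j, hj, hmin⟩ := E.exists_min_image v hE
  exact ⟨j, mem_Pset.2 ⟨hj, fun k hk _ hlt => absurd (hmin k hk) (not_le.2 hlt)⟩⟩

variable [Nonempty ι]

theorem istar_mem_Pset (hE : E.Nonempty) : istar v owner C E ∈ Pset v owner C E := by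
  rw [istar, dif_pos (Pset_nonempty hE)]
  exact (exists_max_image _ v (Pset_nonempty hE)).choose_spec.1

theorem le_istar (hj : j ∈ Pset v owner C E) : v j ≤ v (istar v owner C E) := by
  have hP : (Pset v owner C E).Nonempty := ⟨j, hj⟩
  rw [istar, dif_pos hP]
  exact (exists_max_image _ v hP).choose_spec.2 j hj

theorem istar_mem (hE : E.Nonempty) : istar v owner C E ∈ E :=
  (mem_Pset.1 (istar_mem_Pset hE)).1

/-- If some item worth more than `i*(E)` fitted with it, the least valuable such item would lie
in `P(E)`. -/
theorem lt_istar_add_of_istar_lt (hj : j ∈ E)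
    (hlt : v (istar v owner C E) < v j) : C < v (istar v owner C E) + v j := by
  set m := istar v owner C E
  by_contra! hfit
  obtain ⟨j₀, hj₀, hmin⟩ := exists_min_image {x ∈ E | v m < v x ∧ v m + v x ≤ C} v
    ⟨j, mem_filter.2 ⟨hj, hlt, hfit⟩⟩
  obtain ⟨hj₀E, hmj₀, hfit₀⟩ := mem_filter.1 hj₀
  have hj₀P : j₀ ∉ Pset v owner C E := fun h => absurd (le_istar h) (not_le.2 hmj₀)
  simp only [mem_Pset, hj₀E, true_and, not_forall, not_le] at hj₀P
  obtain ⟨k, hk, -, hkj₀, hover⟩ := hj₀P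
  have := hmin k (mem_filter.2 ⟨hk, by linarith, by linarith⟩)
  linarith

theorem mem_Rset (hE : E.Nonempty) :
    j ∈ Rset v owner C E ↔
      j = istar v owner C E ∨ (j ∈ E ∧ v (istar v owner C E) + v j ≤ C) := by
  rw [Rset, if_pos hE, mem_insert, mem_filter]

theorem istar_mem_Rset (hE : E.Nonempty) : istar v owner C E ∈ Rset v owner C E :=
  (mem_Rset hE).2 (Or.inl rfl)

theorem Rset_subset : Rset v owner C E ⊆ E := by
  unfold Rset
  split_ifs with hE
  · exact insert_subset (istar_mem hE) (filter_subset _ _)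
  · exact empty_subset _

theorem le_istar_of_mem_Rset (hj : j ∈ Rset v owner C E) : v j ≤ v (istar v owner C E) := by
  have hE : E.Nonempty := ⟨j, Rset_subset hj⟩
  rcases (mem_Rset hE).1 hj with rfl | ⟨hjE, hfit⟩
  · exact le_rfl
  · by_contra! hlt
    linarith [lt_istar_add_of_istar_lt hjE hlt]

theorem add_le_of_mem_Rset {k : ι} (hj : j ∈ Rset v owner C E) (hk : k ∈ Rset v owner C E)
    (hjk : j ≠ k) : v j + v k ≤ C := by
  have hE : E.Nonempty := ⟨j, Rset_subset hj⟩
  rcases (mem_Rset hE).1 hk with rfl | ⟨-, hfit⟩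
  · rcases (mem_Rset hE).1 hj with rfl | ⟨-, hfit⟩
    · exact absurd rfl hjk
    · linarith
  · linarith [le_istar_of_mem_Rset hj]

theorem lt_istar_add_of_notMem_Rset (hx : x ∈ E) (hxR : x ∉ Rset v owner C E) :
    C < v (istar v owner C E) + v x := by
  by_contra! hfit
  exact hxR ((mem_Rset ⟨x, hx⟩).2 (Or.inr ⟨hx, hfit⟩))

theorem Rset_erase_of_erase_eq_empty (h : E.erase i = ∅) :
    Rset v owner C (E.erase i) = (Rset v owner C E).erase i := by
  have hR' : Rset v owner C (E.erase i) ⊆ ∅ := h ▸ Rset_subset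
  have hR : (Rset v owner C E).erase i ⊆ ∅ := h ▸ erase_subset_erase i Rset_subset
  rw [subset_empty.1 hR', subset_empty.1 hR]

theorem Rset_erase_of_istar_eq (hE' : (E.erase i).Nonempty)
    (h : istar v owner C (E.erase i) = istar v owner C E) :
    Rset v owner C (E.erase i) = (Rset v owner C E).erase i := by
  have hE : E.Nonempty := hE'.mono (erase_subset _ _)
  have hmi : istar v owner C E ≠ i := h ▸ (mem_erase.1 (istar_mem hE')).1
  ext x
  rw [mem_erase, mem_Rset hE, mem_Rset hE', h, mem_erase]
  constructor
  · rintro (rfl | ⟨⟨hxi, hxE⟩, hfit⟩)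
    · exact ⟨hmi, Or.inl rfl⟩
    · exact ⟨hxi, Or.inr ⟨hxE, hfit⟩⟩
  · rintro ⟨hxi, rfl | ⟨hxE, hfit⟩⟩
    · exact Or.inl rfl
    · exact Or.inr ⟨⟨hxi, hxE⟩, hfit⟩

theorem valueDominated_Rset_of_istar_lt (hheavy : HeavyPairsOverflow v owner C E) (hGE : G ⊆ E)
    (hG : G.Nonempty) (hlt : v (istar v owner C F) < v (istar v owner C G))
    (p : ι → Prop) [DecidablePred p] (hp : p (istar v owner C G))
    (hFG : ∀ x ∈ Rset v owner C F, p x → x ∈ G)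
    (hown : ∀ x ∈ Rset v owner C F, p x → x ∉ Rset v owner C G →
      owner x = owner (istar v owner C G)) :
    ValueDominated v {x ∈ Rset v owner C F | p x} {x ∈ Rset v owner C G | p x} := by
  set m := istar v owner C G
  have hextra : ∀ x ∈ {x ∈ Rset v owner C F | p x} \ {x ∈ Rset v owner C G | p x},
      x ∈ Rset v owner C F ∧ x ∈ G ∧ x ∉ Rset v owner C G ∧ owner x = owner m := by
    intro x hx
    simp only [mem_sdiff, mem_filter, not_and] at hx
    obtain ⟨⟨hxF, hpx⟩, hxG⟩ := hx
    have hxR : x ∉ Rset v owner C G := fun h => hxG h hpx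
    exact ⟨hxF, hFG x hxF hpx, hxR, hown x hxF hpx hxR⟩
  refine .of_sdiff (y := m) (mem_filter.2 ⟨istar_mem_Rset hG, hp⟩) (fun h => ?_)
    (fun x hx => ?_) (fun x hx x' hx' => ?_)
  · exact not_le.2 hlt (le_istar_of_mem_Rset (mem_filter.1 h).1)
  · exact (le_istar_of_mem_Rset (hextra x hx).1).trans hlt.le
  · obtain ⟨hxF, hxG, hxR, hxm⟩ := hextra x hx
    obtain ⟨hx'F, hx'G, hx'R, hx'm⟩ := hextra x' hx'
    by_contra hne
    have := hheavy m (hGE (istar_mem hG)) x (hGE hxG) x' (hGE hx'G) hne (hxm.trans hx'm.symm)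
      (lt_istar_add_of_notMem_Rset hxG hxR) (lt_istar_add_of_notMem_Rset hx'G hx'R)
    linarith [add_le_of_mem_Rset hxF hx'F hne]

theorem aDominates_Rset_erase_of_istar_erase_lt (hv : Function.Injective v)
    (hheavy : HeavyPairsOverflow v owner C E) (hi : i ∈ E) (hE' : (E.erase i).Nonempty)
    (hlt : v (istar v owner C (E.erase i)) < v (istar v owner C E)) :
    aDominates v owner (owner i) (Rset v owner C E) (Rset v owner C (E.erase i)) := by
  have hE : E.Nonempty := ⟨i, hi⟩
  have hmi : istar v owner C E = i := by
    by_contra h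
    exact not_le.2 hlt (le_istar (mem_Pset_erase (istar_mem_Pset hE) h))
  refine aDominates_of_valueDominated owner hv
    (valueDominated_Rset_of_istar_lt hheavy Subset.rfl hE hlt _ (by rw [hmi])
      (fun x hx _ => mem_of_mem_erase (Rset_subset hx)) (fun x _ hx _ => by rw [hmi, hx]))
    (.of_subset fun x hx => ?_)
  obtain ⟨hxR, hxi⟩ := mem_filter.1 hx
  obtain ⟨hxE, hfit⟩ := ((mem_Rset hE).1 hxR).resolve_left fun h => hxi (by rw [h, hmi])
  have hxi' : x ≠ i := by rintro rfl; exact hxi rfl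
  have hfit' : v (istar v owner C (E.erase i)) + v x ≤ C := by linarith
  exact mem_filter.2 ⟨(mem_Rset hE').2 (Or.inr ⟨mem_erase.2 ⟨hxi', hxE⟩, hfit'⟩), hxi⟩

theorem aDominates_Rset_erase_of_istar_lt_istar_erase (hv : Function.Injective v)
    (hheavy : HeavyPairsOverflow v owner C E) (hi : i ∈ E) (hE' : (E.erase i).Nonempty)
    (hlt : v (istar v owner C E) < v (istar v owner C (E.erase i))) :
    aDominates v owner (owner i) (Rset v owner C E) (Rset v owner C (E.erase i)) := by
  have hE : E.Nonempty := ⟨i, hi⟩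
  set m' := istar v owner C (E.erase i)
  have hm'P : m' ∈ Pset v owner C (E.erase i) := istar_mem_Pset hE'
  have hm'E : m' ∈ E := mem_of_mem_erase (istar_mem hE')
  -- `m' ∉ P(E)`, and the only possible witness of this is `i`
  have hm'i : owner m' ≠ owner i := by
    have hm'P_E : m' ∉ Pset v owner C E := fun h => not_le.2 hlt (le_istar h)
    simp only [mem_Pset, hm'E, true_and, not_forall, not_le] at hm'P_E
    obtain ⟨k, hk, hkown, hkv, hover⟩ := hm'P_E
    obtain rfl : k = i := by
      by_contra hki
      exact not_le.2 hover ((mem_Pset.1 hm'P).2 k (mem_erase.2 ⟨hki, hk⟩) hkown hkv)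
    exact hkown.symm
  have hmem_erase : ∀ x ∈ Rset v owner C E, ¬owner x = owner i → x ∈ E.erase i :=
    fun x hx hxi => mem_erase.2 ⟨by rintro rfl; exact hxi rfl, Rset_subset hx⟩
  refine aDominates_of_valueDominated owner hv (.of_subset fun x hx => ?_)
    (valueDominated_Rset_of_istar_lt hheavy (erase_subset _ _) hE' hlt _ hm'i hmem_erase
      fun x hx hxi hxR => ?_)
  · obtain ⟨hxR, hxi⟩ := mem_filter.1 hx
    obtain ⟨hxE, hfit⟩ := ((mem_Rset hE').1 hxR).resolve_left fun h => hm'i (by rwa [h] at hxi)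
    exact mem_filter.2 ⟨(mem_Rset hE).2 (Or.inr ⟨mem_of_mem_erase hxE, by linarith⟩), hxi⟩
  · have hxE' := hmem_erase x hx hxi
    by_contra hown
    exact not_le.2 (lt_istar_add_of_notMem_Rset hxE' hxR)
      ((mem_Pset.1 hm'P).2 x hxE' hown ((le_istar_of_mem_Rset hx).trans_lt hlt))

end Knapsack

theorem stmt_11_general {ι A : Type*} [DecidableEq ι] [DecidableEq A] [Nonempty ι]
    (v : ι → ℝ) (owner : ι → A) (C : ℝ)
    (hC : 0 < C) (hvC : ∀ i, v i ≤ C)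
    (hvinj : Function.Injective v)
    (β : ℝ) (hβ₂ : β ≤ 2 / 3)
    (E : Finset ι)
    (hopt : ∀ a : A, optValUD v C (E.filter (fun i => owner i = a)) < β * C) :
    ∀ a : A, ∀ i ∈ E.filter (fun j => owner j = a),
      aDominates v owner a (Rset v owner C E) (Rset v owner C (E.erase i)) := by
  intro a i hi
  obtain ⟨hiE, rfl⟩ := mem_filter.1 hi
  have hheavy := heavyPairsOverflow_of_optValUD_lt v owner C E hC hvC hβ₂ hopt
  rcases (E.erase i).eq_empty_or_nonempty with hE' | hE'
  · rw [Rset_erase_of_erase_eq_empty hE']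
    exact aDominates_erase owner hvinj _ i
  rcases lt_trichotomy (v (istar v owner C (E.erase i))) (v (istar v owner C E))
    with hlt | heq | hgt
  · exact aDominates_Rset_erase_of_istar_erase_lt hvinj hheavy hiE hE' hlt
  · rw [Rset_erase_of_istar_eq hE' (hvinj heq)]
    exact aDominates_erase owner hvinj _ i
  · exact aDominates_Rset_erase_of_istar_lt_istar_erase hvinj hheavy hiE hE' hgt

/-- if no agent's individual optimum reaches `β·C`, then for every agent `a`
and item `i ∈ E_a`, the restricted set `R(E)` `a`-dominates `R(E∖{i})`. -/
theorem stmt_11 {ι A : Type*} [DecidableEq ι] [DecidableEq A] [Nonempty ι]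
    (v : ι → ℝ) (owner : ι → A) (C : ℝ)
    (hC : 0 < C) (hv : ∀ i, 0 < v i) (hvC : ∀ i, v i ≤ C)
    (hvinj : Function.Injective v)
    (β : ℝ) (hβ₁ : 1 / 2 ≤ β) (hβ₂ : β ≤ 2 / 3)
    (E : Finset ι)
    (hopt : ∀ a : A, optValUD v C (E.filter (fun i => owner i = a)) < β * C) :
    ∀ a : A, ∀ i ∈ E.filter (fun j => owner j = a),
      aDominates v owner a (Rset v owner C E) (Rset v owner C (E.erase i)) :=
  stmt_11_general v owner C hC hvC hvinj β hβ₂ E hopt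
end

section
/- Let E be a set of items of a unit-density instance and let Q ⊆ E be a subset with ℓ(Q) ≥ 2 and v(Q) > C, and let v* = max{v_i : i ∈ Q}. Then the RestrictedGreedy mechanism satisfies v(G_res(E,Q)) ≥ max{1 − v*/C, 1/2 + v*/(2C)} · v(Opt(E)). -/
open Finset

/-- The fractional greedy solution for a unit-density set of items (the size of each item
equals its value): items are packed in decreasing order of value until the capacity is
reached. -/
noncomputable def udx {ι : Type*} (v : ι → ℝ) (C : ℝ) (Q : Finset ι) (i : ι) : ℝ :=
  min 1 (max 0 ((C - ∑ j ∈ Q.filter (fun j => v i < v j), v j) / v i))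

lemma le_kth1 {ι : Type*} (v : ι → ℝ) (Q : Finset ι) {i : ι} (hi : i ∈ Q) :
    v i ≤ kthLargest v Q 1 := by
  unfold kthLargest
  have hmem : v i ∈ (Q.image v).sort (· ≤ ·) :=
    (Finset.mem_sort _).mpr (Finset.mem_image_of_mem v hi)
  set l := (Q.image v).sort (· ≤ ·) with hl
  have hlen : 0 < l.length := List.length_pos_iff.mpr (List.ne_nil_of_mem hmem)
  obtain ⟨k, hk, hkv⟩ := List.mem_iff_getElem.mp hmem
  have h0 : (1:ℕ) - 1 < l.reverse.length := by simpa using hlen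
  rw [List.getD_eq_getElem _ _ h0, List.getElem_reverse]
  have hsorted : l.Pairwise (· ≤ ·) := Finset.pairwise_sort _ _
  rw [← hkv]
  rcases eq_or_lt_of_le (Nat.le_sub_one_of_lt hk) with h | h
  · simp [h]
  · exact List.pairwise_iff_getElem.mp hsorted k _ hk (by omega) (by simpa using h)

lemma le_kth2 {ι : Type*} (v : ι → ℝ) (Q : Finset ι) {i j : ι} (hi : i ∈ Q) (hj : j ∈ Q)
    (hij : v j < v i) : v j ≤ kthLargest v Q 2 := by
  unfold kthLargest
  have hmemi : v i ∈ (Q.image v).sort (· ≤ ·) :=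
    (Finset.mem_sort _).mpr (Finset.mem_image_of_mem v hi)
  have hmemj : v j ∈ (Q.image v).sort (· ≤ ·) :=
    (Finset.mem_sort _).mpr (Finset.mem_image_of_mem v hj)
  set l := (Q.image v).sort (· ≤ ·) with hl
  have hcard : 1 < (Q.image v).card :=
    Finset.one_lt_card.mpr ⟨v i, Finset.mem_image_of_mem v hi, v j,
      Finset.mem_image_of_mem v hj, (ne_of_gt hij)⟩
  have hlen : 1 < l.length := by rwa [hl, Finset.length_sort]
  obtain ⟨ki, hki, hkiv⟩ := List.mem_iff_getElem.mp hmemi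
  obtain ⟨kj, hkj, hkjv⟩ := List.mem_iff_getElem.mp hmemj
  have h0 : (2:ℕ) - 1 < l.reverse.length := by simpa using hlen
  rw [List.getD_eq_getElem _ _ h0, List.getElem_reverse]
  have hsorted : l.Pairwise (· ≤ ·) := Finset.pairwise_sort _ _
  have hkj2 : kj ≤ l.length - 2 := by
    by_contra h
    have hkjeq : kj = l.length - 1 := by omega
    have : v i ≤ v j := by
      rw [← hkiv, ← hkjv]
      rcases eq_or_lt_of_le (Nat.le_sub_one_of_lt hki) with h' | h'
      · simp [h', hkjeq]
      · exact List.pairwise_iff_getElem.mp hsorted ki kj hki hkj (by omega)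
    linarith
  rw [← hkjv]
  rcases eq_or_lt_of_le hkj2 with h | h
  · have : l.length - 1 - (2-1) = kj := by omega
    simp [this]
  · exact List.pairwise_iff_getElem.mp hsorted kj _ hkj (by omega) (by omega)

/-- if `Q ⊆ E` satisfies `ℓ(Q) ≥ 2` (at least two items, and the two most
valuable items of `Q` fit together) and `v(Q) > C`, then the output `G` of the
RestrictedGreedy mechanism on `(E, Q)` satisfies
`v(G) ≥ max{1 − v*/C, 1/2 + v*/(2C)} · v(Opt(E))`, where `v*` is the maximum value of an
item in `Q`. -/
theorem stmt_15 {ι A : Type*} [DecidableEq ι] [DecidableEq A]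
    (v : ι → ℝ) (owner : ι → A) (C : ℝ)
    (hC : 0 < C) (hv : ∀ i, 0 < v i) (hvC : ∀ i, v i ≤ C)
    (hvinj : Function.Injective v)
    (huniq : ∀ (F : Finset ι) (C' : ℝ), C' ≤ C →
      ∀ D₁ D₂ : Finset ι, D₁ ⊆ F → D₂ ⊆ F →
        ∑ i ∈ D₁, v i ≤ C' → ∑ i ∈ D₂, v i ≤ C' →
        (∀ D ⊆ F, ∑ i ∈ D, v i ≤ C' → ∑ i ∈ D, v i ≤ ∑ i ∈ D₁, v i) →
        (∀ D ⊆ F, ∑ i ∈ D, v i ≤ C' → ∑ i ∈ D, v i ≤ ∑ i ∈ D₂, v i) →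
        D₁ = D₂)
    (E Q : Finset ι) (hQE : Q ⊆ E)
    (hQcard : 2 ≤ Q.card)
    (hl2 : kthLargest v Q 1 + kthLargest v Q 2 ≤ C)
    (hQC : C < ∑ i ∈ Q, v i)
    (vstar : ℝ) (hvstar_mem : ∃ i ∈ Q, v i = vstar) (hvstar_max : ∀ i ∈ Q, v i ≤ vstar)
    (G : Finset ι) (hGE : G ⊆ E)
    (hG : ∀ a : A,
      (∑ i ∈ G.filter (fun j => owner j = a), v i ≤
        ∑ i ∈ Q.filter (fun j => owner j = a), v i * udx v C Q i) ∧
      (∀ D ⊆ E.filter (fun j => owner j = a),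
        ∑ i ∈ D, v i ≤ ∑ i ∈ Q.filter (fun j => owner j = a), v i * udx v C Q i →
        ∑ i ∈ D, v i ≤ ∑ i ∈ G.filter (fun j => owner j = a), v i)) :
    max (1 - vstar / C) (1 / 2 + vstar / (2 * C)) * optValUD v C E ≤ ∑ i ∈ G, v i := by
  classical
  set S : ι → ℝ := fun i => ∑ j ∈ Q.filter (fun j => v i < v j), v j with hS
  have hSdef : ∀ i, S i = ∑ j ∈ Q.filter (fun j => v i < v j), v j := fun i => by rw [hS]
  set T : Finset ι := Q.filter (fun i => S i + v i ≤ C) with hT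
  have hTQ : T ⊆ Q := filter_subset _ _
  -- downward closure
  have hdc : ∀ i ∈ T, ∀ j ∈ Q, v i < v j → j ∈ T := by
    intro i hi j hj hij
    have hiC : S i + v i ≤ C := (mem_filter.mp hi).2
    have hsub : insert j (Q.filter (fun k => v j < v k)) ⊆ Q.filter (fun k => v i < v k) := by
      intro k hk
      rcases mem_insert.mp hk with rfl | hk
      · exact mem_filter.mpr ⟨hj, hij⟩
      · rcases mem_filter.mp hk with ⟨h1, h2⟩
        exact mem_filter.mpr ⟨h1, lt_trans hij h2⟩
    have hjnot : j ∉ Q.filter (fun k => v j < v k) := by simp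
    have hle := Finset.sum_le_sum_of_subset_of_nonneg hsub (fun k _ _ => (hv k).le)
    rw [Finset.sum_insert hjnot] at hle
    rw [← hSdef j, ← hSdef i] at hle
    refine mem_filter.mpr ⟨hj, ?_⟩
    have := hv i
    linarith
  obtain ⟨i1, hi1Q, hi1v⟩ := hvstar_mem
  have herase : (Q.erase i1).Nonempty := by
    rw [← Finset.card_pos, Finset.card_erase_of_mem hi1Q]; omega
  obtain ⟨i2, hi2m, hi2max⟩ := Finset.exists_max_image (Q.erase i1) v herase
  have hi2Q : i2 ∈ Q := Finset.mem_of_mem_erase hi2m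
  have hi2ne : i2 ≠ i1 := Finset.ne_of_mem_erase hi2m
  have hv21 : v i2 < v i1 :=
    lt_of_le_of_ne (hi1v ▸ hvstar_max i2 hi2Q) (fun h => hi2ne (hvinj h))
  have hsum12 : v i1 + v i2 ≤ C := by
    have h1 : v i1 ≤ kthLargest v Q 1 := le_kth1 v Q hi1Q
    have h2 : v i2 ≤ kthLargest v Q 2 := le_kth2 v Q hi1Q hi2Q hv21
    linarith
  have hSi1 : S i1 = 0 := by
    rw [hSdef]
    apply Finset.sum_eq_zero_iff_of_nonneg (fun k _ => (hv k).le) |>.mpr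
    intro k hk
    rcases mem_filter.mp hk with ⟨h1, h2⟩
    exact absurd (hi1v ▸ hvstar_max k h1) (not_le.mpr h2)
  have hi1T : i1 ∈ T := by
    refine mem_filter.mpr ⟨hi1Q, ?_⟩
    rw [hSi1]; simpa using hvC i1
  have hSi2 : S i2 = v i1 := by
    have hfe : Q.filter (fun j => v i2 < v j) = {i1} := by
      ext k
      simp only [mem_filter, Finset.mem_singleton]
      constructor
      · rintro ⟨h1, h2⟩
        by_contra hk
        exact absurd (hi2max k (Finset.mem_erase.mpr ⟨hk, h1⟩)) (not_le.mpr h2)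
      · rintro rfl; exact ⟨hi1Q, hv21⟩
    rw [hSdef, hfe, Finset.sum_singleton]
  have hi2T : i2 ∈ T := by
    refine mem_filter.mpr ⟨hi2Q, ?_⟩
    rw [hSi2]; linarith
  -- v(T) ≤ C
  obtain ⟨i0, hi0T, hi0min⟩ := Finset.exists_min_image T v ⟨i1, hi1T⟩
  have hTeq0 : T = insert i0 (Q.filter (fun j => v i0 < v j)) := by
    ext k
    constructor
    · intro hk
      by_cases hk0 : k = i0
      · simp [hk0]
      · have : v i0 < v k :=
          lt_of_le_of_ne (hi0min k hk) (fun h => hk0 (hvinj h.symm))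
        exact mem_insert_of_mem (mem_filter.mpr ⟨hTQ hk, this⟩)
    · intro hk
      rcases mem_insert.mp hk with rfl | hk
      · exact hi0T
      · rcases mem_filter.mp hk with ⟨h1, h2⟩
        exact hdc i0 hi0T k h1 h2
  have hvT_le : ∑ i ∈ T, v i ≤ C := by
    have hni : i0 ∉ Q.filter (fun j => v i0 < v j) := by simp
    have h0 : S i0 + v i0 ≤ C := (mem_filter.mp hi0T).2
    rw [hSdef] at h0
    rw [hTeq0, Finset.sum_insert hni]
    linarith
  -- the fractional item f
  have hQTne : (Q \ T).Nonempty := by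
    rw [Finset.sdiff_nonempty]
    intro hsub
    have : T = Q := Finset.Subset.antisymm hTQ hsub
    rw [this] at hvT_le
    linarith
  obtain ⟨f, hfm, hfmax⟩ := Finset.exists_max_image (Q \ T) v hQTne
  have hfQ : f ∈ Q := (Finset.mem_sdiff.mp hfm).1
  have hfT : f ∉ T := (Finset.mem_sdiff.mp hfm).2
  have hTf : T = Q.filter (fun j => v f < v j) := by
    ext k
    simp only [mem_filter]
    constructor
    · intro hk
      refine ⟨hTQ hk, ?_⟩
      rcases lt_trichotomy (v f) (v k) with h | h | h
      · exact h
      · obtain rfl := hvinj h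
        exact absurd hk hfT
      · exact absurd (hdc k hk f hfQ h) hfT
    · rintro ⟨h1, h2⟩
      by_contra hkT
      exact absurd (hfmax k (Finset.mem_sdiff.mpr ⟨h1, hkT⟩)) (not_le.mpr h2)
  have hfbig : C < ∑ i ∈ T, v i + v f := by
    have hnot : ¬ (S f + v f ≤ C) := fun h => hfT (mem_filter.mpr ⟨hfQ, h⟩)
    push_neg at hnot
    rw [hSdef, ← hTf] at hnot
    linarith
  have hf2 : v f ≤ v i2 := by
    have hf1 : f ≠ i1 := fun h => hfT (h ▸ hi1T)
    exact hi2max f (Finset.mem_erase.mpr ⟨hf1, hfQ⟩)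
  have h12T : v i1 + v i2 ≤ ∑ i ∈ T, v i := by
    have hsub : ({i1, i2} : Finset ι) ⊆ T := by
      intro k hk
      rcases Finset.mem_insert.mp hk with rfl | hk
      · exact hi1T
      · rw [Finset.mem_singleton.mp hk]; exact hi2T
    have := Finset.sum_le_sum_of_subset_of_nonneg hsub (fun k _ _ => (hv k).le)
    rwa [Finset.sum_pair (Ne.symm hi2ne)] at this
  -- comparing G with T
  have hudxnn : ∀ i, 0 ≤ udx v C Q i :=
    fun i => le_min zero_le_one (le_max_left 0 _)
  have hudx1 : ∀ i ∈ T, v i * udx v C Q i = v i := by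
    intro i hi
    have h := (mem_filter.mp hi).2
    rw [hSdef] at h
    have hvi := hv i
    have h1 : (1:ℝ) ≤ (C - ∑ j ∈ Q.filter (fun j => v i < v j), v j) / v i := by
      rw [le_div_iff₀ hvi]; linarith
    unfold udx
    rw [max_eq_right (le_trans zero_le_one h1), min_eq_left h1, mul_one]
  have hagent : ∀ a, ∑ i ∈ T.filter (fun j => owner j = a), v i ≤
      ∑ i ∈ G.filter (fun j => owner j = a), v i := by
    intro a
    have hTsub : T.filter (fun j => owner j = a) ⊆ E.filter (fun j => owner j = a) :=
      Finset.filter_subset_filter _ (hTQ.trans hQE)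
    have hbudget : ∑ i ∈ T.filter (fun j => owner j = a), v i ≤
        ∑ i ∈ Q.filter (fun j => owner j = a), v i * udx v C Q i := by
      calc ∑ i ∈ T.filter (fun j => owner j = a), v i
          = ∑ i ∈ T.filter (fun j => owner j = a), v i * udx v C Q i :=
            Finset.sum_congr rfl (fun i hi => (hudx1 i (mem_filter.mp hi).1).symm)
        _ ≤ ∑ i ∈ Q.filter (fun j => owner j = a), v i * udx v C Q i :=
            Finset.sum_le_sum_of_subset_of_nonneg
              (Finset.filter_subset_filter _ hTQ)
              (fun i _ _ => mul_nonneg (hv i).le (hudxnn i))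
    exact (hG a).2 _ hTsub hbudget
  have hTG : ∑ i ∈ T, v i ≤ ∑ i ∈ G, v i := by
    have hGsum : ∑ a ∈ (G ∪ T).image owner, ∑ i ∈ G.filter (fun j => owner j = a), v i
        = ∑ i ∈ G, v i :=
      Finset.sum_fiberwise_of_maps_to
        (fun i hi => Finset.mem_image_of_mem owner (Finset.mem_union_left _ hi)) v
    have hTsum : ∑ a ∈ (G ∪ T).image owner, ∑ i ∈ T.filter (fun j => owner j = a), v i
        = ∑ i ∈ T, v i :=
      Finset.sum_fiberwise_of_maps_to
        (fun i hi => Finset.mem_image_of_mem owner (Finset.mem_union_right _ hi)) v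
    rw [← hGsum, ← hTsum]
    exact Finset.sum_le_sum (fun a _ => hagent a)
  -- optimum bound
  have hOptC : optValUD v C E ≤ C := by
    apply Real.sSup_le _ hC.le
    rintro x ⟨D, ⟨hDE, hDC⟩, rfl⟩
    exact hDC
  have hvs0 : 0 < vstar := hi1v ▸ hv i1
  have hvsC : vstar ≤ C := hi1v ▸ hvC i1
  have hM : (0:ℝ) ≤ max (1 - vstar / C) (1 / 2 + vstar / (2 * C)) :=
    le_max_of_le_right (by positivity)
  have hvi2s : v i2 ≤ vstar := hvstar_max i2 hi2Q
  calc max (1 - vstar / C) (1 / 2 + vstar / (2 * C)) * optValUD v C E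
      ≤ max (1 - vstar / C) (1 / 2 + vstar / (2 * C)) * C :=
        mul_le_mul_of_nonneg_left hOptC hM
    _ ≤ ∑ i ∈ T, v i := by
        rw [max_mul_of_nonneg _ _ hC.le]
        apply max_le
        · have he : (1 - vstar / C) * C = C - vstar := by field_simp
          rw [he]; linarith
        · have he : (1 / 2 + vstar / (2 * C)) * C = (C + vstar) / 2 := by
            field_simp
          rw [he]; linarith
    _ ≤ ∑ i ∈ G, v i := hTG
end
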